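/- Let f_CPL : ℝᵈ → ℝ be a maximum of K affine functions, f_CPL(x) = max_{i=1,…,K} (aᵢ·x + bᵢ), with K ≥ 2. Then there exist a depth-K network with all weights nonnegative that represents f_CPL exactly on the expanded input: there are nonnegative vectors w₁, …, w_K ∈ ℝ^{2d} (i.e., all entries ≥ 0) and scalars c₁, …, c_K such that, writing x̂ = (x, −x) ∈ ℝ^{2d} and defining z₁(x) = max(w₁·x̂ + c₁, 0), z_i(x) = max(z_{i−1}(x) + wᵢ·x̂ + cᵢ, 0) for i = 2, …, K−1, and z_K(x) = z_{K−1}(x) + w_K·x̂ + c_K, one has z_K(x) = f_CPL(x) for all x ∈ ℝᵈ. -/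
import Mathlib


/-- The hidden layers of the nonnegative-weight single-ReLU-per-layer network
on the expanded input `x̂ ∈ ℝ^{2d}`:
`znet … x̂ i` is the layer `z_{i+1}` of the construction
`z₁ = max (w₁⋅x̂ + c₁) 0`, `z_i = max (z_{i-1} + wᵢ⋅x̂ + cᵢ) 0`. -/
noncomputable def znet (d : ℕ) (w : ℕ → (Fin d ⊕ Fin d) → ℝ) (c : ℕ → ℝ)
    (xhat : Fin d ⊕ Fin d → ℝ) : ℕ → ℝ
  | 0 => max ((∑ l, w 0 l * xhat l) + c 0) 0
  | (i + 1) => max (znet d w c xhat i + ((∑ l, w (i + 1) l * xhat l) + c (i + 1))) 0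

/-- **Theorem 2, second statement (efficiency of ICNN representation).**
A maximum of `K + 2` affine functions `x ↦ aᵢ⋅x + bᵢ` is represented exactly by
a depth-`K + 2` network with all weights nonnegative on the expanded input
`x̂ = (x, -x) ∈ ℝ^{2d}`: there are nonnegative vectors `w₁, …, w_{K+2} ∈ ℝ^{2d}`
and scalars `c₁, …, c_{K+2}` such that with
`z₁(x) = max (w₁⋅x̂ + c₁) 0`, `z_i(x) = max (z_{i-1}(x) + wᵢ⋅x̂ + cᵢ) 0` for
`i = 2, …, K+1`, and `z_{K+2}(x) = z_{K+1}(x) + w_{K+2}⋅x̂ + c_{K+2}`,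
one has `z_{K+2}(x) = maxᵢ (aᵢ⋅x + bᵢ)` for all `x ∈ ℝᵈ`. -/
theorem maxAffine_exact_icnn_representation (d K : ℕ)
    (a : Fin (K + 2) → Fin d → ℝ) (b : Fin (K + 2) → ℝ) :
    ∃ (w : ℕ → (Fin d ⊕ Fin d) → ℝ) (c : ℕ → ℝ),
      (∀ i, i ≤ K + 1 → ∀ l, 0 ≤ w i l) ∧
      ∀ x : Fin d → ℝ,
        znet d w c (Sum.elim x (fun l => -x l)) K +
            ((∑ l, w (K + 1) l * Sum.elim x (fun l' => -x l') l) + c (K + 1)) =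
          Finset.univ.sup' Finset.univ_nonempty
            (fun i : Fin (K + 2) => (∑ l, a i l * x l) + b i) := by
  set A : ℕ → Fin d → ℝ := fun i j => if h : i < K + 2 then a ⟨i, h⟩ j else 0 with hA
  set B : ℕ → ℝ := fun i => if h : i < K + 2 then b ⟨i, h⟩ else 0 with hB
  refine ⟨fun i => Sum.elim (fun j => max (A i j - A (i + 1) j) 0)
      (fun j => max (-(A i j - A (i + 1) j)) 0),
    fun i => B i - B (i + 1), ?_, ?_⟩
  · rintro i _ (j | j) <;> exact le_max_right _ _
  intro x
  have hmax : ∀ s t : ℝ, max (s - t) 0 + t = max s t := by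
    intro s t
    rcases le_total s t with h | h
    · rw [max_eq_right (by linarith : s - t ≤ 0), max_eq_right h]; ring
    · rw [max_eq_left (by linarith : (0:ℝ) ≤ s - t), max_eq_left h]; ring
  have hsum : ∀ i : ℕ,
      (∑ l, Sum.elim (fun j => max (A i j - A (i + 1) j) 0)
        (fun j => max (-(A i j - A (i + 1) j)) 0) l * Sum.elim x (fun l' => -x l') l)
      = ∑ j, (A i j - A (i + 1) j) * x j := by
    intro i
    rw [Fintype.sum_sum_type, ← Finset.sum_add_distrib]
    refine Finset.sum_congr rfl fun j _ => ?_
    simp only [Sum.elim_inl, Sum.elim_inr]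
    rcases le_total (A i j - A (i + 1) j) 0 with h | h
    · rw [max_eq_right h, max_eq_left (by linarith)]; ring
    · rw [max_eq_left h, max_eq_right (by linarith)]; ring
  set G : ℕ → ℝ := fun i => (∑ j, A i j * x j) + B i with hG
  have hGtop : G (K + 2) = 0 := by simp [hG, hA, hB]
  have haff : ∀ i : ℕ, (∑ j, (A i j - A (i + 1) j) * x j) + (B i - B (i + 1))
      = G i - G (i + 1) := by
    intro i
    simp only [hG, sub_mul, Finset.sum_sub_distrib]
    ring
  have hne : ∀ n : ℕ, (Finset.range (n + 1)).Nonempty := fun n => ⟨0, by simp⟩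
  have hstep : ∀ n : ℕ, (Finset.range (n + 2)).sup' (hne (n + 1)) G
      = max ((Finset.range (n + 1)).sup' (hne n) G) (G (n + 1)) := by
    intro n
    refine le_antisymm (Finset.sup'_le _ _ fun i hi => ?_) (max_le ?_ ?_)
    · rw [Finset.mem_range] at hi
      rcases Nat.lt_or_ge i (n + 1) with h | h
      · exact le_max_of_le_left (Finset.le_sup' _ (Finset.mem_range.mpr h))
      · have : i = n + 1 := by omega
        rw [this]
        exact le_max_right _ _
    · exact Finset.sup'_le _ _ fun i hi => Finset.le_sup' _
        (Finset.mem_range.mpr (by have := Finset.mem_range.mp hi; omega))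
    · exact Finset.le_sup' _ (Finset.mem_range.mpr (by omega))
  have key : ∀ i : ℕ, znet d (fun i => Sum.elim (fun j => max (A i j - A (i + 1) j) 0)
      (fun j => max (-(A i j - A (i + 1) j)) 0)) (fun i => B i - B (i + 1))
      (Sum.elim x (fun l' => -x l')) i
      = max ((Finset.range (i + 1)).sup' (hne i) G - G (i + 1)) 0 := by
    intro i
    induction i with
    | zero =>
      show max _ 0 = _
      rw [hsum 0, haff 0]
      have : (Finset.range 1).sup' (hne 0) G = G 0 := by simp
      rw [this]
    | succ n ih =>
      show max (znet _ _ _ _ n + _) 0 = _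
      rw [ih, hsum (n + 1), haff (n + 1), hstep n, ← add_sub_assoc, hmax]
  rw [key K, hsum (K + 1), haff (K + 1), hGtop, sub_zero, hmax, ← hstep K]
  refine le_antisymm ?_ ?_
  · refine Finset.sup'_le _ _ fun i hi => ?_
    rw [Finset.mem_range] at hi
    have : G i = (∑ l, a ⟨i, hi⟩ l * x l) + b ⟨i, hi⟩ := by simp [hG, hA, hB, hi]
    rw [this]
    exact Finset.le_sup' (fun i : Fin (K + 2) => (∑ l, a i l * x l) + b i)
      (Finset.mem_univ ⟨i, hi⟩)
  · refine Finset.sup'_le _ _ fun i _ => ?_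
    have : (∑ l, a i l * x l) + b i = G i.val := by simp [hG, hA, hB, i.isLt]
    rw [this]
    exact Finset.le_sup' _ (Finset.mem_range.mpr (by omega))
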